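/- arXiv:1208.2130 — 2 statements merged into one kernel-verified Lean document; each statement's English description precedes it below -/
import Mathlib

section
/- Let M be a metric space, L ≥ 1, and f : M → ℝ^d a map satisfying L⁻¹·d_M(x,y) ≤ ‖f(x) − f(y)‖ ≤ L·d_M(x,y) for all x,y ∈ M (in particular f is injective). Let C ⊆ M be a finite subset with at least two elements, let δ ∈ (0,1), and let s > 0. If w ∈ C is (δ,s)-supported in C (with respect to the metric of M), then f(w) is (δ/(2L²), s)-supported in the finite set f(C) ⊆ ℝ^d (with respect to the Euclidean metric). -/
/-- The isolation radius of `w` in the finite set `C`: the minimal distance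
from `w` to a different point of `C`. -/
noncomputable def isolationRadius {M : Type*} [MetricSpace M] (C : Set M) (w : M) : ℝ :=
  sInf {r : ℝ | ∃ z ∈ C, z ≠ w ∧ r = dist w z}

/-- `w` is `(δ,s)`-supported in `C`: for every `p`, the set
`C ∩ (B(w, δ⁻¹ρ) \ B(p, δρ))` has at least `s` points, where `ρ` is the isolation
radius of `w` in `C` and balls are closed. -/
def IsSupported {M : Type*} [MetricSpace M] (C : Set M) (δ s : ℝ) (w : M) : Prop :=
  ∀ p : M,
    s ≤ ((C ∩ (Metric.closedBall w (δ⁻¹ * isolationRadius C w) \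
        Metric.closedBall p (δ * isolationRadius C w))).ncard : ℝ)

/-!
A bilipschitz map changes the isolation radius of `w` by at most the factor `L`, so it maps the
outer ball `B(w, δ⁻¹ρ)` into the outer ball around `f w` for the new parameter. For the
excluded ball `B(p, δ'ρ')`, the points of `C` that `f` sends into it have pairwise distance at
most `2Lδ'ρ' ≤ δρ`, so they all lie in a single ball `B(q, δρ)` excluded in `C`; the factor
`2L²` in `δ' = δ/(2L²)` pays for this. Since `f` is injective, counting transfers.
-/

open Metric Set NNReal

theorem Set.Finite.sInf_image_le_mul_sInf_image {α : Type*} {S : Set α} (hS : S.Finite)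
    {g h : α → ℝ} {c : ℝ} (hgh : ∀ z ∈ S, g z ≤ c * h z) :
    sInf (g '' S) ≤ c * sInf (h '' S) := by
  rcases S.eq_empty_or_nonempty with rfl | hne
  · simp
  obtain ⟨z, hz, hz_min⟩ := (hne.image h).csInf_mem (hS.image h)
  rw [← hz_min]
  exact (csInf_le (hS.image g).bddBelow (mem_image_of_mem g hz)).trans (hgh z hz)

section IsolationRadius

variable {M N : Type*} [MetricSpace M] [MetricSpace N]

theorem isolationRadius_nonneg (C : Set M) (w : M) : 0 ≤ isolationRadius C w :=
  Real.sInf_nonneg fun _ ⟨_, _, _, hr⟩ => hr ▸ dist_nonneg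

theorem isolationRadius_eq_sInf_image (C : Set M) (w : M) :
    isolationRadius C w = sInf (dist w '' (C \ {w})) := by
  unfold isolationRadius
  congr 1
  ext r
  simp [eq_comm, and_assoc]

omit [MetricSpace M] in
theorem isolationRadius_image {f : M → N} (hf : Function.Injective f) (C : Set M) (w : M) :
    isolationRadius (f '' C) (f w) = sInf ((fun z => dist (f w) (f z)) '' (C \ {w})) := by
  rw [isolationRadius_eq_sInf_image, ← image_singleton, ← image_sdiff hf, image_image]

theorem LipschitzWith.isolationRadius_image_le {K : ℝ≥0} {f : M → N} (hf : LipschitzWith K f)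
    (hinj : Function.Injective f) {C : Set M} (hC : C.Finite) (w : M) :
    isolationRadius (f '' C) (f w) ≤ K * isolationRadius C w := by
  rw [isolationRadius_image hinj, isolationRadius_eq_sInf_image]
  exact hC.sdiff.sInf_image_le_mul_sInf_image fun z _ => hf.dist_le_mul w z

theorem AntilipschitzWith.isolationRadius_le {K : ℝ≥0} {f : M → N} (hf : AntilipschitzWith K f)
    {C : Set M} (hC : C.Finite) (w : M) :
    isolationRadius C w ≤ K * isolationRadius (f '' C) (f w) := by
  rw [isolationRadius_image hf.injective, isolationRadius_eq_sInf_image]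
  exact hC.sdiff.sInf_image_le_mul_sInf_image fun z _ => hf.le_mul_dist w z

end IsolationRadius

theorem AntilipschitzWith.exists_preimage_closedBall_subset {M N : Type*} [PseudoMetricSpace M]
    [PseudoMetricSpace N] [Nonempty M] {K : ℝ≥0} {f : M → N} (hf : AntilipschitzWith K f)
    (p : N) (ε : ℝ) : ∃ q, f ⁻¹' closedBall p ε ⊆ closedBall q (2 * K * ε) := by
  rcases (f ⁻¹' closedBall p ε).eq_empty_or_nonempty with h | ⟨q, hq⟩
  · exact ⟨Classical.arbitrary M, h ▸ empty_subset _⟩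
  refine ⟨q, fun x hx => ?_⟩
  calc dist x q ≤ K * dist (f x) (f q) := hf.le_mul_dist x q
    _ ≤ K * (ε + ε) := by gcongr; exact (dist_triangle_right _ _ p).trans (add_le_add hx hq)
    _ = 2 * K * ε := by ring

theorem IsSupported.image {M N : Type*} [MetricSpace M] [MetricSpace N] {f : M → N}
    {K₁ K₂ : ℝ≥0} (hf₁ : LipschitzWith K₁ f) (hf₂ : AntilipschitzWith K₂ f) {C : Set M}
    (hC : C.Finite) {δ s : ℝ} (hδ : 0 ≤ δ) {w : M} (h : IsSupported C δ s w) :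
    IsSupported (f '' C) (δ / (2 * (K₁ * K₂))) s (f w) := by
  set δ' := δ / (2 * (K₁ * K₂))
  set ρ := isolationRadius C w
  set ρ' := isolationRadius (f '' C) (f w)
  have hρ : 0 ≤ ρ := isolationRadius_nonneg C w
  have hρ' : 0 ≤ ρ' := isolationRadius_nonneg _ _
  have hρ'_le : ρ' ≤ K₁ * ρ := hf₁.isolationRadius_image_le hf₂.injective hC w
  have hρ_le : ρ ≤ K₂ * ρ' := hf₂.isolationRadius_le hC w
  have h_in : MapsTo f (closedBall w (δ⁻¹ * ρ)) (closedBall (f w) (δ'⁻¹ * ρ')) := by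
    refine (hf₁.mapsTo_closedBall w _).mono_right (closedBall_subset_closedBall ?_)
    calc K₁ * (δ⁻¹ * ρ) ≤ K₁ * (δ⁻¹ * (K₂ * ρ')) := by gcongr
      _ = (K₁ * K₂) / δ * ρ' := by ring
      _ ≤ δ'⁻¹ * ρ' := by
        rw [inv_div]
        gcongr ?_ / _ * _
        exact le_mul_of_one_le_left (by positivity) one_le_two
  intro p
  have : Nonempty M := ⟨w⟩
  obtain ⟨q, hq⟩ := hf₂.exists_preimage_closedBall_subset p (δ' * ρ')
  have h_out : f ⁻¹' closedBall p (δ' * ρ') ⊆ closedBall q (δ * ρ) := by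
    refine hq.trans (closedBall_subset_closedBall ?_)
    calc 2 * K₂ * (δ' * ρ') ≤ 2 * K₂ * (δ' * (K₁ * ρ)) := by gcongr
      _ = δ * ρ * ((K₁ * K₂) / (K₁ * K₂)) := by ring
      _ ≤ δ * ρ := mul_le_of_le_one_right (by positivity) (div_self_le_one _)
  have h_sub : f '' (C ∩ (closedBall w (δ⁻¹ * ρ) \ closedBall q (δ * ρ))) ⊆
      f '' C ∩ (closedBall (f w) (δ'⁻¹ * ρ') \ closedBall p (δ' * ρ')) := by
    rintro _ ⟨x, ⟨hxC, hxw, hxq⟩, rfl⟩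
    exact ⟨mem_image_of_mem f hxC, h_in hxw, fun hxp => hxq (h_out hxp)⟩
  calc s ≤ (C ∩ (closedBall w (δ⁻¹ * ρ) \ closedBall q (δ * ρ))).ncard := h q
    _ = (f '' (C ∩ (closedBall w (δ⁻¹ * ρ) \ closedBall q (δ * ρ)))).ncard := by
      rw [ncard_image_of_injective _ hf₂.injective]
    _ ≤ _ := Nat.cast_le.mpr (ncard_le_ncard h_sub ((hC.image f).subset inter_subset_left))

theorem supported_image_bilipschitz_general {M : Type*} [MetricSpace M] (d : ℕ) (L : ℝ) (hL : 1 ≤ L)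
    (f : M → EuclideanSpace ℝ (Fin d))
    (hf : ∀ x y : M, L⁻¹ * dist x y ≤ ‖f x - f y‖ ∧ ‖f x - f y‖ ≤ L * dist x y)
    (C : Set M) (hCfin : C.Finite)
    (δ s : ℝ) (hδ0 : 0 < δ)
    (w : M) (hsupp : IsSupported C δ s w) :
    IsSupported (f '' C) (δ / (2 * L ^ 2)) s (f w) := by
  have hL0 : 0 < L := by linarith
  have hf₁ : LipschitzWith L.toNNReal f :=
    .of_dist_le' fun x y => (dist_eq_norm (f x) (f y)).trans_le (hf x y).2
  have hf₂ : AntilipschitzWith L.toNNReal f := .of_le_mul_dist fun x y => by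
    rw [Real.coe_toNNReal L hL0.le, dist_eq_norm (f x)]
    exact (inv_mul_le_iff₀ hL0).1 (hf x y).1
  simpa [Real.coe_toNNReal L hL0.le, sq] using hsupp.image hf₁ hf₂ hCfin hδ0.le

/-- If `f : M → ℝ^d` is an `L`-bilipschitz embedding and `w ∈ C` is `(δ,s)`-supported
in `C ⊆ M`, then `f w` is `(δ/(2L²), s)`-supported in `f(C) ⊆ ℝ^d`. -/
theorem supported_image_bilipschitz {M : Type*} [MetricSpace M] (d : ℕ) (L : ℝ) (hL : 1 ≤ L)
    (f : M → EuclideanSpace ℝ (Fin d))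
    (hf : ∀ x y : M, L⁻¹ * dist x y ≤ ‖f x - f y‖ ∧ ‖f x - f y‖ ≤ L * dist x y)
    (C : Set M) (hCfin : C.Finite) (hC2 : 2 ≤ C.ncard)
    (δ s : ℝ) (hδ0 : 0 < δ) (hδ1 : δ < 1) (hs : 0 < s)
    (w : M) (hw : w ∈ C) (hsupp : IsSupported C δ s w) :
    IsSupported (f '' C) (δ / (2 * L ^ 2)) s (f w) :=
  supported_image_bilipschitz_general d L hL f hf C hCfin δ s hδ0 w hsupp
end

section
/- Let G be an infinite, locally finite simple graph whose valence is bounded by D (every vertex has at most D neighbors), and let 1 < p < ∞. If G is p-parabolic, then the Cheeger constant of G vanishes: h(G) = 0; that is, for every ε > 0 there exists a nonempty finite set A of vertices with |∂A| < ε·|A|, where ∂A is the set of edges of G having exactly one endpoint in A. -/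
/-- The norm of the discrete gradient of `u` at the vertex `v`:
`|∇u(v)| = (Σ_{w ~ v} (u w − u v)²)^{1/2}`. -/
noncomputable def gradNorm {V : Type*} (G : SimpleGraph V) (u : V → ℝ) (v : V) : ℝ :=
  Real.sqrt (∑' w : G.neighborSet v, (u w - u v) ^ 2)

/-- The `p`-energy of `u`: `E_p(u) = Σ_v |∇u(v)|^p`. -/
noncomputable def pEnergy {V : Type*} (p : ℝ) (G : SimpleGraph V) (u : V → ℝ) : ℝ :=
  ∑' v : V, gradNorm G u v ^ p

/-- The `p`-capacity of a set `S` of vertices: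
the infimum of the `p`-energies of finitely supported functions that are `≥ 1` on `S`. -/
noncomputable def pCap {V : Type*} (p : ℝ) (G : SimpleGraph V) (S : Set V) : ℝ :=
  sInf {E : ℝ | ∃ u : V → ℝ, (Function.support u).Finite ∧
    (∀ v ∈ S, 1 ≤ u v) ∧ E = pEnergy p G u}

/-- A graph is `p`-parabolic if every finite nonempty set of vertices has zero `p`-capacity. -/
def IsPParabolic {V : Type*} (p : ℝ) (G : SimpleGraph V) : Prop :=
  ∀ S : Set V, S.Finite → S.Nonempty → pCap p G S = 0

/-- The edge boundary of a set `A` of vertices: edges with exactly one endpoint in `A`. -/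
def edgeBoundary {V : Type*} (G : SimpleGraph V) (A : Set V) : Set (Sym2 V) :=
  {e ∈ G.edgeSet | ∃ a b : V, e = s(a, b) ∧ a ∈ A ∧ b ∉ A}

/-! If `|∂A| ≥ ε |A|` for every finite `A`, peeling off the minimum of a finitely supported
`f ≥ 0` layer by layer turns this into the co-area bound `ε Σ f ≤ Σ_{v ~ w} (f v - f w)⁺`.
For `f = |u|^p`, the tangent-line bound `a^p - b^p ≤ p a^(p-1) (a - b)`, the estimate
`|u v - u w| ≤ |∇u(v)|`, bounded valence and Young's inequality with a small weight on `|u|^p`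
yield the Sobolev inequality `Σ |u|^p ≤ C E_p(u)`. Every finite nonempty set then has
`p`-capacity at least `1 / C > 0`, so `G` is not `p`-parabolic. -/

open Finset

namespace Real

theorem rpow_sub_rpow_le {a b p : ℝ} (hb : 0 ≤ b) (hba : b ≤ a) (hp : 1 ≤ p) :
    a ^ p - b ^ p ≤ p * a ^ (p - 1) * (a - b) := by
  rcases hba.eq_or_lt with rfl | hba
  · simp
  have hslope := (convexOn_rpow hp).slope_le_of_hasDerivAt (Set.mem_Ici.2 hb)
    (Set.mem_Ici.2 (hb.trans hba.le)) hba (hasDerivAt_rpow_const (Or.inr hp))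
  rwa [slope_def_field, div_le_iff₀ (sub_pos.2 hba)] at hslope

theorem max_rpow_abs_sub_rpow_abs_le {p : ℝ} (hp : 1 ≤ p) (x y : ℝ) :
    max (|x| ^ p - |y| ^ p) 0 ≤ p * |x| ^ (p - 1) * |x - y| := by
  have hcoef : 0 ≤ p * |x| ^ (p - 1) := by positivity
  rcases le_total |y| |x| with hyx | hxy
  · refine max_le ?_ (by positivity)
    exact (rpow_sub_rpow_le (abs_nonneg y) hyx hp).trans
      (mul_le_mul_of_nonneg_left (abs_sub_abs_le_abs_sub x y) hcoef)
  · rw [max_eq_right (sub_nonpos.2 (rpow_le_rpow (abs_nonneg x) hxy (by linarith)))]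
    positivity

theorem exists_rpow_sub_one_mul_le {p : ℝ} (hp : 1 < p) {s : ℝ} (hs : 0 < s) :
    ∃ C > 0, ∀ a d : ℝ, 0 ≤ a → 0 ≤ d →
      a ^ (p - 1) * d ≤ s * a ^ p + C * d ^ p := by
  set q := p / (p - 1)
  have hpq : p.HolderConjugate q := .conjExponent hp
  have hq : 0 < q := hpq.symm.pos
  -- Young's inequality for `(a ^ (p - 1) * t) * (d / t)`, with `t` chosen so that
  -- `t ^ q / q = s`
  set t := (q * s) ^ (1 / q)
  have ht : 0 < t := by positivity
  have htq : t ^ q = q * s := by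
    rw [← rpow_mul (by positivity), one_div_mul_cancel hq.ne', rpow_one]
  refine ⟨t ^ (-p) / p, by positivity, fun a d ha hd => ?_⟩
  calc a ^ (p - 1) * d = a ^ (p - 1) * t * (d / t) := by field_simp
    _ ≤ (a ^ (p - 1) * t) ^ q / q + (d / t) ^ p / p :=
      young_inequality_of_nonneg (by positivity) (by positivity) hpq.symm
    _ = s * a ^ p + t ^ (-p) / p * d ^ p := by
      rw [mul_rpow (rpow_nonneg ha _) ht.le, ← rpow_mul ha, hpq.sub_one_mul_conj, htq,
        div_rpow hd ht.le, rpow_neg ht.le]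
      field_simp

end Real

theorem Finset.sum_max_sub_eq_sum_max_sub_truncate_add {V : Type*} [DecidableEq V]
    {A t : Finset V} {f : V → ℝ} {m : ℝ} {v : V} (hv : v ∈ A) (hm : 0 ≤ m)
    (hfm : ∀ x ∈ A, m ≤ f x) (hf : ∀ x ∉ A, f x = 0) :
    ∑ w ∈ t, max (f v - f w) 0 =
      ∑ w ∈ t, max (max (f v - m) 0 - max (f w - m) 0) 0 + m * #(t \ A) := by
  have hterm : ∀ w, max (f v - f w) 0 =
      max (max (f v - m) 0 - max (f w - m) 0) 0 + if w ∈ A then 0 else m := by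
    intro w
    have hmv := hfm v hv
    by_cases hw : w ∈ A
    · rw [if_pos hw, add_zero, max_eq_left (sub_nonneg.2 (hfm w hw)),
        max_eq_left (sub_nonneg.2 hmv), sub_sub_sub_cancel_right]
    · rw [if_neg hw, hf w hw, max_eq_right (by linarith : 0 - m ≤ 0),
        max_eq_left (by linarith : 0 ≤ f v - m), max_eq_left (by linarith : 0 ≤ f v - 0),
        max_eq_left (by linarith : 0 ≤ f v - m - 0)]
      ring
  rw [sum_congr rfl fun w _ => hterm w, sum_add_distrib, sum_ite, sum_const_zero, zero_add,
    sum_const, nsmul_eq_mul, mul_comm, sdiff_eq_filter]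

namespace SimpleGraph

variable {V : Type*} (G : SimpleGraph V)

theorem inv_le_pCap_of_sum_rpow_abs_le {p : ℝ} (hp : 0 ≤ p) {C : ℝ} (hC : 0 < C)
    (hsob : ∀ (s : Finset V) (u : V → ℝ), (∀ v ∉ s, u v = 0) →
      ∑ v ∈ s, |u v| ^ p ≤ C * pEnergy p G u)
    {S : Set V} (hS : S.Finite) (hSne : S.Nonempty) : C⁻¹ ≤ pCap p G S := by
  refine le_csInf ⟨_, S.indicator 1, hS.subset (Set.support_indicator_subset),
    fun v hv => by simp [hv], rfl⟩ ?_
  rintro _ ⟨u, hu, hu1, rfl⟩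
  obtain ⟨v₀, hv₀⟩ := hSne
  have hv₀u : 1 ≤ |u v₀| ^ p := Real.one_le_rpow ((hu1 v₀ hv₀).trans (le_abs_self _)) hp
  have hsum := hsob hu.toFinset u fun v hv => by simpa using hv
  rw [inv_le_iff_one_le_mul₀' hC]
  refine hv₀u.trans <|
    (single_le_sum (f := fun v => |u v| ^ p) (fun v _ => by positivity) ?_).trans hsum
  simp only [Set.Finite.mem_toFinset, Function.mem_support]
  linarith [hu1 v₀ hv₀]

theorem gradNorm_eq_zero {u : V → ℝ} {v : V} (hv : u v = 0)
    (hnbr : ∀ w ∈ G.neighborSet v, u w = 0) : gradNorm G u v = 0 := by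
  simp [gradNorm, hv, fun w : G.neighborSet v => hnbr w w.2]

section LocallyFinite

variable [G.LocallyFinite]

theorem edgeBoundary_ncard_eq_sum [DecidableEq V] (A : Finset V) :
    (edgeBoundary G A).ncard = ∑ v ∈ A, #(G.neighborFinset v \ A) := by
  have hA : edgeBoundary G A =
      (A.sigma fun v => G.neighborFinset v \ A).image fun x => s(x.1, x.2) := by
    ext e
    simp only [edgeBoundary, Set.mem_ofPred_eq, coe_image, Set.mem_image, mem_coe, mem_sigma,
      mem_sdiff, mem_neighborFinset, Sigma.exists]
    constructor
    · rintro ⟨he, a, b, rfl, ha, hb⟩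
      exact ⟨a, b, ⟨ha, he, hb⟩, rfl⟩
    · rintro ⟨a, b, ⟨ha, hab, hb⟩, rfl⟩
      exact ⟨hab, a, b, rfl, ha, hb⟩
  rw [hA, Set.ncard_coe_finset, card_image_of_injOn, card_sigma]
  rintro ⟨a, b⟩ hab ⟨a', b'⟩ hab' heq
  simp only [coe_sigma, Set.mem_sigma_iff, mem_coe, mem_sdiff] at hab hab'
  rcases Sym2.eq_iff.mp heq with ⟨rfl, rfl⟩ | ⟨rfl, rfl⟩
  · rfl
  · exact absurd hab.1 hab'.2.2

theorem mul_sum_le_sum_sum_max_sub [DecidableEq V] {ε : ℝ}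
    (hiso : ∀ A : Finset V, A.Nonempty → ε * #A ≤ (edgeBoundary G A).ncard)
    (A : Finset V) {f : V → ℝ} (hf0 : 0 ≤ f) (hfA : ∀ v ∉ A, f v = 0) :
    ε * ∑ v ∈ A, f v ≤ ∑ v ∈ A, ∑ w ∈ G.neighborFinset v, max (f v - f w) 0 := by
  induction A using Finset.strongInduction generalizing f with
  | H A ih =>
  rcases A.eq_empty_or_nonempty with rfl | hA
  · simp
  -- lowering `f` by its minimum `f a` on `A` kills `f` at `a` and costs exactly `f a * |∂A|`
  obtain ⟨a, ha, hmin⟩ := A.exists_min_image f hA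
  have hfa : 0 ≤ f a := hf0 a
  set g := fun x => max (f x - f a) 0
  have hg0 : 0 ≤ g := fun x => le_max_right _ _
  have hg : ∀ x ∉ A.erase a, g x = 0 := by
    intro x hx
    by_cases hxa : x = a
    · simp [g, hxa]
    · simp [g, hfA x (fun h => hx (mem_erase.2 ⟨hxa, h⟩)), hfa]
  have hsum : ∑ v ∈ A, f v = ∑ v ∈ A.erase a, g v + f a * #A := by
    rw [sum_erase _ (hg a (notMem_erase a A)), mul_comm, ← nsmul_eq_mul, ← sum_const,
      ← sum_add_distrib]
    exact sum_congr rfl fun v hv => by simp [g, max_eq_left (sub_nonneg.2 (hmin v hv))]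
  have hvar : ∑ v ∈ A, ∑ w ∈ G.neighborFinset v, max (f v - f w) 0 =
      ∑ v ∈ A, ∑ w ∈ G.neighborFinset v, max (g v - g w) 0 +
        f a * ∑ v ∈ A, (#(G.neighborFinset v \ A) : ℝ) := by
    rw [mul_sum, ← sum_add_distrib]
    exact sum_congr rfl fun v hv =>
      sum_max_sub_eq_sum_max_sub_truncate_add hv (hf0 a) hmin hfA
  have hmono : ∑ v ∈ A.erase a, ∑ w ∈ G.neighborFinset v, max (g v - g w) 0 ≤
      ∑ v ∈ A, ∑ w ∈ G.neighborFinset v, max (g v - g w) 0 :=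
    sum_le_sum_of_subset_of_nonneg (erase_subset a A)
      fun v _ _ => sum_nonneg fun w _ => le_max_right _ _
  have hIH := ih (A.erase a) (erase_ssubset ha) hg0 hg
  have hbdry := mul_le_mul_of_nonneg_left (hiso A hA) hfa
  rw [edgeBoundary_ncard_eq_sum] at hbdry
  push_cast at hbdry
  rw [hsum, hvar]
  linarith

theorem abs_sub_le_gradNorm (u : V → ℝ) {v w : V} (h : G.Adj v w) :
    |u v - u w| ≤ gradNorm G u v := by
  rw [abs_sub_comm, ← Real.sqrt_sq_eq_abs]
  exact Real.sqrt_le_sqrt <| Summable.of_finite.le_tsum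
    (f := fun x : G.neighborSet v => (u x - u v) ^ 2) ⟨w, h⟩ fun _ _ => sq_nonneg _

theorem sum_rpow_gradNorm_le_pEnergy {p : ℝ} (hp : 0 < p) {u : V → ℝ}
    (hu : (Function.support u).Finite) (s : Finset V) :
    ∑ v ∈ s, gradNorm G u v ^ p ≤ pEnergy p G u := by
  have hfin : (Function.support fun v => gradNorm G u v ^ p).Finite := by
    refine (hu.union (hu.biUnion fun w _ => (G.neighborSet w).toFinite)).subset fun v hv => ?_
    by_contra hout
    simp only [Set.mem_union, Function.mem_support, Set.mem_iUnion, not_or, not_exists,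
      not_not] at hout
    refine hv ?_
    show gradNorm G u v ^ p = 0
    rw [G.gradNorm_eq_zero hout.1 fun w hw => ?_, Real.zero_rpow hp.ne']
    by_contra hw'
    exact hout.2 w hw' (G.adj_symm hw)
  exact (summable_of_hasFiniteSupport hfin).sum_le_tsum s
    fun v _ => Real.rpow_nonneg (Real.sqrt_nonneg _) p

theorem exists_sum_rpow_abs_le_mul_pEnergy [DecidableEq V] {D : ℕ}
    (hdeg : ∀ v, G.degree v ≤ D) {p : ℝ} (hp : 1 < p) {ε : ℝ} (hε : 0 < ε)
    (hiso : ∀ A : Finset V, A.Nonempty → ε * #A ≤ (edgeBoundary G A).ncard) :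
    ∃ C > 0, ∀ (s : Finset V) (u : V → ℝ), (∀ v ∉ s, u v = 0) →
      ∑ v ∈ s, |u v| ^ p ≤ C * pEnergy p G u := by
  have hp0 : 0 < p := by linarith
  set Dr : ℝ := D + 1
  obtain ⟨K, hK, hyoung⟩ :=
    Real.exists_rpow_sub_one_mul_le hp (s := ε / (2 * p * Dr)) (by positivity)
  refine ⟨2 * Dr * p * K / ε, by positivity, fun s u hu => ?_⟩
  set f := fun v => |u v| ^ p
  have hvertex : ∀ v, ∑ w ∈ G.neighborFinset v, max (f v - f w) 0 ≤
      Dr * p * (ε / (2 * p * Dr) * f v + K * gradNorm G u v ^ p) := by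
    intro v
    have hgrad : 0 ≤ gradNorm G u v := Real.sqrt_nonneg _
    calc ∑ w ∈ G.neighborFinset v, max (f v - f w) 0
        ≤ ∑ w ∈ G.neighborFinset v, p * (|u v| ^ (p - 1) * gradNorm G u v) :=
          sum_le_sum fun w hw => (Real.max_rpow_abs_sub_rpow_abs_le hp.le _ _).trans <| by
            rw [← mul_assoc]
            gcongr
            exact G.abs_sub_le_gradNorm u ((G.mem_neighborFinset v w).1 hw)
      _ = G.degree v * p * (|u v| ^ (p - 1) * gradNorm G u v) := by
          rw [sum_const, card_neighborFinset_eq_degree, nsmul_eq_mul, mul_assoc]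
      _ ≤ Dr * p * (ε / (2 * p * Dr) * f v + K * gradNorm G u v ^ p) := by
          gcongr
          · exact (Nat.cast_le.2 (hdeg v)).trans (le_add_of_nonneg_right zero_le_one)
          · exact hyoung _ _ (abs_nonneg _) hgrad
  have hcoarea := G.mul_sum_le_sum_sum_max_sub hiso s (f := f) (fun v => by positivity)
    fun v hv => by simp [f, hu v hv, Real.zero_rpow hp0.ne']
  have henergy := G.sum_rpow_gradNorm_le_pEnergy hp0
    ((s.finite_toSet).subset fun v hv => by_contra fun h => hv (hu v h)) s
  have hsum := hcoarea.trans (sum_le_sum fun v _ => hvertex v)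
  rw [← mul_sum, sum_add_distrib, ← mul_sum, ← mul_sum] at hsum
  have hDr : Dr * p * (ε / (2 * p * Dr)) = ε / 2 := by
    have : 0 < Dr := by positivity
    field_simp
  rw [mul_add, ← mul_assoc, hDr] at hsum
  rw [div_mul_eq_mul_div, le_div_iff₀' hε]
  linarith [mul_le_mul_of_nonneg_left henergy (by positivity : 0 ≤ Dr * p * K)]

end LocallyFinite

end SimpleGraph

/-- An infinite graph of valence at most `D` which is `p`-parabolic for some `1 < p < ∞`
has vanishing Cheeger constant. -/
theorem pParabolic_cheeger_zero {V : Type*} [Infinite V] (G : SimpleGraph V)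
    (D : ℕ) (hloc : ∀ v : V, (G.neighborSet v).Finite)
    (hdeg : ∀ v : V, (G.neighborSet v).ncard ≤ D)
    (p : ℝ) (hp : 1 < p) (hpar : IsPParabolic p G) :
    ∀ ε : ℝ, 0 < ε → ∃ A : Set V, A.Finite ∧ A.Nonempty ∧
      ((edgeBoundary G A).ncard : ℝ) < ε * A.ncard := by
  classical
  let : G.LocallyFinite := fun v => (hloc v).fintype
  intro ε hε
  by_contra! hiso
  have hdegD : ∀ v, G.degree v ≤ D := fun v => by
    rw [← G.card_neighborFinset_eq_degree, G.neighborFinset_def, ← Set.ncard_eq_toFinset_card']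
    exact hdeg v
  obtain ⟨C, hC, hsob⟩ := G.exists_sum_rpow_abs_le_mul_pEnergy hdegD hp hε
    fun A hA => by simpa using hiso A A.finite_toSet (by simpa)
  obtain ⟨v₀⟩ : Nonempty V := inferInstance
  have hcap := G.inv_le_pCap_of_sum_rpow_abs_le (by linarith) hC hsob
    (Set.finite_singleton v₀) (Set.singleton_nonempty v₀)
  rw [hpar {v₀} (Set.finite_singleton v₀) (Set.singleton_nonempty v₀)] at hcap
  exact (inv_pos.2 hC).not_ge hcap
end
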